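/- Let (L, ∘_λ, [·_λ ·]) be a transposed Poisson conformal superalgebra. Then for all homogeneous x, y, z ∈ L the following identity holds: (−1)^{|x||z|} x ∘_λ [y_μ z] + (−1)^{|x||y|} y ∘_μ [z_{−∂−λ} x] + (−1)^{|y||z|} z ∘_{−∂−λ−μ} [x_λ y] = 0. -/

import Mathlib

open Polynomial
open scoped TensorProduct

noncomputable section

namespace TPCSAFormal

/-- The super-sign `(-1)^{i·j}` for parities `i, j ∈ ℤ/2ℤ`. -/
def sgn (i j : ZMod 2) : ℂ := (-1 : ℂ) ^ (i.val * j.val)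

variable (L : Type*) [AddCommGroup L] [Module ℂ L]
  [Module (Polynomial ℂ) L] [IsScalarTower ℂ (Polynomial ℂ) L]

/-- A conformal `λ`-product on the `ℂ[∂]`-module `L`, recorded by its family of `n`-th
product coefficients: `a ∘_λ b = ∑_n λ^n • coeff n a b`, with finitely many nonzero terms.
This is exactly the data of a `ℂ`-bilinear map `L ⊗ L → ℂ[λ] ⊗ L`. -/
structure ConformalProduct where
  coeff : ℕ → L →ₗ[ℂ] L →ₗ[ℂ] L
  coeff_finite : ∀ a b : L, ∃ N : ℕ, ∀ n : ℕ, N ≤ n → coeff n a b = 0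

variable {L}

/-- The value `a ∘_λ b` of the `λ`-product at `λ ∈ ℂ`.  Since `ℂ` is infinite, identities
between such values for all `λ` are equivalent to the corresponding polynomial identities. -/
def ConformalProduct.mul (m : ConformalProduct L) (lam : ℂ) (a b : L) : L :=
  ∑ᶠ n : ℕ, lam ^ n • m.coeff n a b

/-- The value `a ∘_{-∂-λ} b`, where `∂` acts on `L` as scalar multiplication by
`X ∈ ℂ[∂]` (the variable `λ` being replaced by the operator `-∂-λ`). -/
def ConformalProduct.cmul (m : ConformalProduct L) (lam : ℂ) (a b : L) : L :=
  ∑ᶠ n : ℕ, ((-((X : Polynomial ℂ) + C lam)) ^ n) • m.coeff n a b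

variable (L) in
/-- A `ℤ₂`-grading on `L` making it a `ℤ₂`-graded `ℂ[∂]`-module: `L = L₀ ⊕ L₁` with
`∂ L_i ⊆ L_i`, where `∂` acts as multiplication by `X ∈ ℂ[∂]`. -/
structure SuperModule where
  grade : ZMod 2 → Submodule ℂ L
  isInternal : DirectSum.IsInternal grade
  X_smul_mem : ∀ (i : ZMod 2) (a : L), a ∈ grade i → (X : Polynomial ℂ) • a ∈ grade i

/-- `m` is an even `λ`-product on the `ℤ₂`-graded `ℂ[∂]`-module `(L, S)`:
it is even with respect to the grading and conformally sesquilinear. -/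
structure IsLambdaProduct (S : SuperModule L) (m : ConformalProduct L) : Prop where
  even : ∀ (i j : ZMod 2) (a b : L), a ∈ S.grade i → b ∈ S.grade j →
    ∀ n : ℕ, m.coeff n a b ∈ S.grade (i + j)
  sesq_left : ∀ (lam : ℂ) (a b : L),
    m.mul lam ((X : Polynomial ℂ) • a) b = (-lam) • m.mul lam a b
  sesq_right : ∀ (lam : ℂ) (a b : L),
    m.mul lam a ((X : Polynomial ℂ) • b) =
      (X : Polynomial ℂ) • m.mul lam a b + lam • m.mul lam a b

/-- `(L, S, m)` is a commutative associative conformal superalgebra. -/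
structure IsCommAssoc (S : SuperModule L) (m : ConformalProduct L)
    extends IsLambdaProduct S m : Prop where
  comm : ∀ (i j : ZMod 2) (a b : L), a ∈ S.grade i → b ∈ S.grade j →
    ∀ lam : ℂ, m.mul lam a b = sgn i j • m.cmul lam b a
  assoc : ∀ (lam mu : ℂ) (a b c : L),
    m.mul lam a (m.mul mu b c) = m.mul (lam + mu) (m.mul lam a b) c

/-- `(L, S, br)` is a Lie conformal superalgebra. -/
structure IsLie (S : SuperModule L) (br : ConformalProduct L)
    extends IsLambdaProduct S br : Prop where
  skew : ∀ (i j : ZMod 2) (a b : L), a ∈ S.grade i → b ∈ S.grade j →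
    ∀ lam : ℂ, br.mul lam a b = -(sgn i j • br.cmul lam b a)
  jacobi : ∀ (i j : ZMod 2) (a b : L), a ∈ S.grade i → b ∈ S.grade j →
    ∀ (c : L) (lam mu : ℂ),
      br.mul lam a (br.mul mu b c) =
        br.mul (lam + mu) (br.mul lam a b) c + sgn i j • br.mul mu b (br.mul lam a c)

/-- `(L, S, m, br)` is a transposed Poisson conformal superalgebra. -/
structure IsTPCSA (S : SuperModule L) (m br : ConformalProduct L) : Prop where
  commAssoc : IsCommAssoc S m
  lie : IsLie S br
  transposedLeibniz : ∀ (i j : ZMod 2) (a b : L), a ∈ S.grade i → b ∈ S.grade j →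
    ∀ (c : L) (lam mu : ℂ),
      (2 : ℂ) • m.mul lam a (br.mul mu b c) =
        br.mul (lam + mu) (m.mul lam a b) c + sgn i j • br.mul mu b (m.mul lam a c)

/-- `(L, S, m, br)` is a Poisson conformal superalgebra. -/
structure IsPCSA (S : SuperModule L) (m br : ConformalProduct L) : Prop where
  commAssoc : IsCommAssoc S m
  lie : IsLie S br
  leibniz : ∀ (i j : ZMod 2) (a b : L), a ∈ S.grade i → b ∈ S.grade j →
    ∀ (c : L) (lam mu : ℂ),
      br.mul lam a (m.mul mu b c) =
        m.mul (lam + mu) (br.mul lam a b) c + sgn i j • m.mul mu b (br.mul lam a c)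

/-- `(L, S, br, α)` is a Hom-Lie conformal superalgebra. -/
structure IsHomLie (S : SuperModule L) (br : ConformalProduct L) (α : L → L)
    extends IsLambdaProduct S br : Prop where
  map_smul_add : ∀ (c : ℂ) (a b : L), α (c • a + b) = c • α a + α b
  map_grade : ∀ (i : ZMod 2) (a : L), a ∈ S.grade i → α a ∈ S.grade i
  commute_partial : ∀ a : L, α ((X : Polynomial ℂ) • a) = (X : Polynomial ℂ) • α a
  skew : ∀ (i j : ZMod 2) (a b : L), a ∈ S.grade i → b ∈ S.grade j →
    ∀ lam : ℂ, br.mul lam a b = -(sgn i j • br.cmul lam b a)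
  homJacobi : ∀ (i j : ZMod 2) (a b : L), a ∈ S.grade i → b ∈ S.grade j →
    ∀ (c : L) (lam mu : ℂ),
      br.mul lam (α a) (br.mul mu b c) =
        br.mul (lam + mu) (br.mul lam a b) (α c) + sgn i j • br.mul mu (α b) (br.mul lam a c)

/-- `(L, S, p)` is a left-symmetric conformal superalgebra. -/
structure IsLeftSymmetric (S : SuperModule L) (p : ConformalProduct L)
    extends IsLambdaProduct S p : Prop where
  leftSym : ∀ (i j : ZMod 2) (a b : L), a ∈ S.grade i → b ∈ S.grade j →
    ∀ (c : L) (lam mu : ℂ),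
      p.mul (lam + mu) (p.mul lam a b) c - p.mul lam a (p.mul mu b c) =
        sgn i j • (p.mul (lam + mu) (p.mul mu b a) c - p.mul mu b (p.mul lam a c))

/-- `(L, S, p)` is a (left) Novikov conformal superalgebra. -/
structure IsNovikov (S : SuperModule L) (p : ConformalProduct L)
    extends IsLeftSymmetric S p : Prop where
  novikov : ∀ (j k : ZMod 2) (b c : L), b ∈ S.grade j → c ∈ S.grade k →
    ∀ (a : L) (lam mu : ℂ),
      p.mul (lam + mu) (p.mul lam a b) c = sgn j k • p.cmul mu (p.mul lam a c) b

/-- `(L, S, mc, p)` is a Novikov-Poisson conformal superalgebra. -/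
structure IsNovikovPoisson (S : SuperModule L) (mc p : ConformalProduct L) : Prop where
  commAssoc : IsCommAssoc S mc
  novikov : IsNovikov S p
  compat₁ : ∀ (lam mu : ℂ) (a b c : L),
    p.mul (lam + mu) (mc.mul lam a b) c = mc.mul lam a (p.mul mu b c)
  compat₂ : ∀ (i j : ZMod 2) (a b : L), a ∈ S.grade i → b ∈ S.grade j →
    ∀ (c : L) (lam mu : ℂ),
      mc.mul (lam + mu) (p.mul lam a b) c - p.mul lam a (mc.mul mu b c) =
        sgn i j • (mc.mul (lam + mu) (p.mul mu b a) c - p.mul mu b (mc.mul lam a c))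

/-- `(L, S, mc, p)` is a pre-Lie commutative conformal superalgebra. -/
structure IsPreLieComm (S : SuperModule L) (mc p : ConformalProduct L) : Prop where
  commAssoc : IsCommAssoc S mc
  leftSymmetric : IsLeftSymmetric S p
  compat : ∀ (i j : ZMod 2) (a b : L), a ∈ S.grade i → b ∈ S.grade j →
    ∀ (c : L) (lam mu : ℂ),
      p.mul lam a (mc.mul mu b c) =
        mc.mul (lam + mu) (p.mul lam a b) c + sgn i j • mc.mul mu b (p.mul lam a c)

/-- `(L, S, mc, p)` is a pre-Lie Poisson conformal superalgebra. -/
structure IsPreLiePoisson (S : SuperModule L) (mc p : ConformalProduct L) : Prop where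
  commAssoc : IsCommAssoc S mc
  leftSymmetric : IsLeftSymmetric S p
  compat₁ : ∀ (lam mu : ℂ) (a b c : L),
    p.mul (lam + mu) (mc.mul lam a b) c = mc.mul lam a (p.mul mu b c)
  compat₂ : ∀ (i j : ZMod 2) (a b : L), a ∈ S.grade i → b ∈ S.grade j →
    ∀ (c : L) (lam mu : ℂ),
      mc.mul (lam + mu) (p.mul lam a b) c - p.mul lam a (mc.mul mu b c) =
        sgn i j • (mc.mul (lam + mu) (p.mul mu b a) c - p.mul mu b (mc.mul lam a c))

/-!
Twice each term of the cyclic sum is expanded by the transposed Leibniz rule: for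
`x ∘_λ [y_μ z]` and `y ∘_μ [x_λ z]` directly, and for `z ∘_{-∂-λ-μ} [x_λ y]` through the rule
for `z ∘_α [x_λ y]` with `α` specialised to `-∂-λ-μ`. Rewritten by (super)commutativity and
skew-symmetry, the three expansions only involve `[(x ∘_λ y)_{λ+μ} z]`, `[x_λ (y ∘_μ z)]` and
`[y_μ (x ∘_λ z)]`, and they cancel. The specialisation is legitimate because an identity between
`L`-valued polynomials in `α ∈ ℂ` holds coefficientwise, hence for `α` replaced by any element
of `ℂ[∂]`.
-/

open Finset

theorem sgn_comm (i j : ZMod 2) : sgn i j = sgn j i := by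
  rw [sgn, sgn, Nat.mul_comm]

theorem sgn_mul_self (i j : ZMod 2) : sgn i j * sgn i j = 1 := by
  rw [sgn, ← pow_add, ← two_mul, pow_mul, neg_one_sq, one_pow]

theorem sgn_add_left (i j k : ZMod 2) : sgn (i + j) k = sgn i k * sgn j k := by
  rw [sgn, sgn, sgn, ← pow_add, neg_one_pow_eq_pow_mod_two,
    neg_one_pow_eq_pow_mod_two (n := i.val * k.val + j.val * k.val), ZMod.val_add, ← add_mul,
    Nat.mod_mul_mod]

theorem sgn_add_right (i j k : ZMod 2) : sgn i (j + k) = sgn i j * sgn i k := by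
  rw [sgn_comm, sgn_add_left, sgn_comm j, sgn_comm k]

section PolynomialCoefficients

variable {M : Type*} [AddCommGroup M] [Module ℂ M]

theorem eq_of_forall_sum_pow_smul_eq {N : ℕ} {v w : ℕ → M}
    (h : ∀ α : ℂ, ∑ n ∈ range N, α ^ n • v n = ∑ n ∈ range N, α ^ n • w n) :
    ∀ n ∈ range N, v n = w n := by
  intro n hn
  rw [← sub_eq_zero, ← Module.forall_dual_apply_eq_zero_iff ℂ]
  intro φ
  have hp : ∑ k ∈ range N, monomial k (φ (v k - w k)) = 0 := Polynomial.funext fun α ↦ by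
    have := congrArg φ (h α)
    simp only [map_sum, map_smul, smul_eq_mul] at this
    simp only [eval_finsetSum, eval_monomial, eval_sub, map_sub, sum_sub_distrib, eval_zero]
    simp only [mul_comm (φ _), this, sub_self]
  simpa [finsetSum_coeff, coeff_monomial, hn] using congrArg (coeff · n) hp

/-- The coefficients of `∑_{n<N} (t + c)^n • b n` as a polynomial in `t`. -/
def shiftCoeff (N : ℕ) (c : ℂ) (b : ℕ → M) (k : ℕ) : M :=
  ∑ n ∈ range N, ((n.choose k : ℂ) * c ^ (n - k)) • b n

theorem sum_add_pow_smul_eq {R : Type*} [CommRing R] [Algebra ℂ R] [Module R M]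
    [IsScalarTower ℂ R M] (N : ℕ) (c : ℂ) (b : ℕ → M) (t : R) :
    ∑ n ∈ range N, (t + algebraMap ℂ R c) ^ n • b n =
      ∑ k ∈ range N, t ^ k • shiftCoeff N c b k := by
  have expand : ∀ n ∈ range N, (t + algebraMap ℂ R c) ^ n =
      ∑ k ∈ range N, t ^ k * algebraMap ℂ R ((n.choose k : ℂ) * c ^ (n - k)) := by
    intro n hn
    rw [add_pow]
    refine sum_subset (range_subset_range.2 (mem_range.1 hn)) (fun k _ hk ↦ ?_) |>.trans
      (sum_congr rfl fun k _ ↦ ?_)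
    · rw [Nat.choose_eq_zero_of_lt (by simpa using hk)]
      simp
    · simp only [map_mul, map_pow, map_natCast]
      ring
  simp only [shiftCoeff, smul_sum]
  rw [sum_comm]
  refine sum_congr rfl fun n hn ↦ ?_
  rw [expand n hn, sum_smul]
  exact sum_congr rfl fun k _ ↦ by rw [mul_smul, algebraMap_smul]

end PolynomialCoefficients

namespace ConformalProduct

variable {M : Type*} [AddCommGroup M] [Module ℂ M] (m : ConformalProduct M)

theorem eventually_coeff_eq_zero (a b : M) : ∀ᶠ n in Filter.atTop, m.coeff n a b = 0 :=
  Filter.eventually_atTop.2 (m.coeff_finite a b)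

theorem hasFiniteSupport_smul_coeff {R : Type*} [Semiring R] [Module R M] (s : ℕ → R)
    (a b : M) : Function.HasFiniteSupport fun n ↦ s n • m.coeff n a b := by
  obtain ⟨N, hN⟩ := m.coeff_finite a b
  refine (Set.finite_Iio N).subset fun n hn ↦ ?_
  by_contra hlt
  exact hn (by simp only [hN n (not_lt.1 hlt), smul_zero])

theorem finsum_smul_coeff_eq_sum {R : Type*} [Semiring R] [Module R M] (s : ℕ → R)
    {a b : M} {N : ℕ} (h : ∀ n, N ≤ n → m.coeff n a b = 0) :
    ∑ᶠ n, s n • m.coeff n a b = ∑ n ∈ range N, s n • m.coeff n a b := by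
  refine finsum_eq_sum_of_support_subset _ fun n hn ↦ ?_
  by_contra hlt
  exact hn (by simp only [h n (by simpa using hlt), smul_zero])

theorem mul_eq_sum (lam : ℂ) {a b : M} {N : ℕ} (h : ∀ n, N ≤ n → m.coeff n a b = 0) :
    m.mul lam a b = ∑ n ∈ range N, lam ^ n • m.coeff n a b :=
  m.finsum_smul_coeff_eq_sum _ h

theorem cmul_eq_sum [Module ℂ[X] M] (lam : ℂ) {a b : M} {N : ℕ}
    (h : ∀ n, N ≤ n → m.coeff n a b = 0) :
    m.cmul lam a b = ∑ n ∈ range N, (-(X + C lam)) ^ n • m.coeff n a b :=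
  m.finsum_smul_coeff_eq_sum _ h

def mulₗ (lam : ℂ) : M →ₗ[ℂ] M →ₗ[ℂ] M :=
  LinearMap.mk₂ ℂ (m.mul lam)
    (fun a a' b ↦ by
      simp only [mul, map_add, LinearMap.add_apply, smul_add]
      exact finsum_add_distrib (m.hasFiniteSupport_smul_coeff _ a b)
        (m.hasFiniteSupport_smul_coeff _ a' b))
    (fun c a b ↦ by
      simp only [mul, map_smul, LinearMap.smul_apply, smul_comm _ c]
      exact (smul_finsum' c (m.hasFiniteSupport_smul_coeff _ a b)).symm)
    (fun a b b' ↦ by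
      simp only [mul, map_add, smul_add]
      exact finsum_add_distrib (m.hasFiniteSupport_smul_coeff _ a b)
        (m.hasFiniteSupport_smul_coeff _ a b'))
    (fun c a b ↦ by
      simp only [mul, map_smul, smul_comm _ c]
      exact (smul_finsum' c (m.hasFiniteSupport_smul_coeff _ a b)).symm)

@[simp]
theorem mulₗ_apply (lam : ℂ) (a b : M) : m.mulₗ lam a b = m.mul lam a b := rfl

theorem mul_add_left (lam : ℂ) (a a' b : M) :
    m.mul lam (a + a') b = m.mul lam a b + m.mul lam a' b := by
  simp only [← mulₗ_apply, map_add, LinearMap.add_apply]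

theorem mul_smul_left (lam c : ℂ) (a b : M) : m.mul lam (c • a) b = c • m.mul lam a b := by
  simp only [← mulₗ_apply, map_smul, LinearMap.smul_apply]

theorem mul_sum_left (lam : ℂ) (s : Finset ℕ) (f : ℕ → M) (b : M) :
    m.mul lam (∑ n ∈ s, f n) b = ∑ n ∈ s, m.mul lam (f n) b := by
  simp only [← mulₗ_apply, map_sum, LinearMap.sum_apply]

theorem mul_add_right (lam : ℂ) (a b b' : M) :
    m.mul lam a (b + b') = m.mul lam a b + m.mul lam a b' := by
  simp only [← mulₗ_apply, map_add]

theorem mul_smul_right (lam c : ℂ) (a b : M) : m.mul lam a (c • b) = c • m.mul lam a b := by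
  simp only [← mulₗ_apply, map_smul]

theorem mul_neg_right (lam : ℂ) (a b : M) : m.mul lam a (-b) = -m.mul lam a b := by
  simp only [← mulₗ_apply, map_neg]

theorem mul_sum_right (lam : ℂ) (a : M) (s : Finset ℕ) (f : ℕ → M) :
    m.mul lam a (∑ n ∈ s, f n) = ∑ n ∈ s, m.mul lam a (f n) := by
  simp only [← mulₗ_apply, map_sum]

end ConformalProduct

theorem C_smul_eq_smul {R M : Type*} [CommSemiring R] [AddCommMonoid M] [Module R M]
    [Module R[X] M] [IsScalarTower R R[X] M] (c : R) (v : M) : (C c : R[X]) • v = c • v := by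
  rw [← algebraMap_eq, algebraMap_smul]

namespace IsLambdaProduct

theorem mul_mem {M : Type*} [AddCommGroup M] [Module ℂ M] [Module ℂ[X] M] {S : SuperModule M}
    {m : ConformalProduct M} (h : IsLambdaProduct S m) {i j : ZMod 2} {a b : M}
    (ha : a ∈ S.grade i) (hb : b ∈ S.grade j) (lam : ℂ) : m.mul lam a b ∈ S.grade (i + j) := by
  obtain ⟨N, hN⟩ := m.coeff_finite a b
  rw [m.mul_eq_sum lam hN]
  exact Submodule.sum_mem _ fun n _ ↦ Submodule.smul_mem _ _ (h.even i j a b ha hb n)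

variable {S : SuperModule L} {m : ConformalProduct L} (h : IsLambdaProduct S m)
include h

theorem mul_poly_smul_left (lam : ℂ) (q : ℂ[X]) (a b : L) :
    m.mul lam (q • a) b = q.eval (-lam) • m.mul lam a b := by
  induction q using Polynomial.induction_on with
  | C c => rw [C_smul_eq_smul, m.mul_smul_left, eval_C]
  | add p q hp hq => rw [add_smul, m.mul_add_left, hp, hq, eval_add, add_smul]
  | monomial n c ih =>
    rw [pow_succ, ← mul_assoc, mul_comm _ X, mul_smul, h.sesq_left, ih, smul_smul]
    simp only [eval_mul, eval_X]

theorem mul_poly_smul_right (lam : ℂ) (q : ℂ[X]) (a b : L) :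
    m.mul lam a (q • b) = q.comp (X + C lam) • m.mul lam a b := by
  induction q using Polynomial.induction_on with
  | C c => rw [C_smul_eq_smul, m.mul_smul_right, C_comp, C_smul_eq_smul]
  | add p q hp hq => rw [add_smul, m.mul_add_right, hp, hq, add_comp, add_smul]
  | monomial n c ih =>
    rw [pow_succ, ← mul_assoc, mul_comm _ X, mul_smul, h.sesq_right, ih, mul_comp (X : ℂ[X]),
      X_comp, add_mul, add_smul, mul_smul, mul_smul, C_smul_eq_smul]

theorem mul_cmul_left (m' : ConformalProduct L) (r c : ℂ) (a b d : L) :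
    m.mul r (m'.cmul c a b) d = m.mul r (m'.mul (r - c) a b) d := by
  obtain ⟨N, hN⟩ := m'.coeff_finite a b
  rw [m'.cmul_eq_sum c hN, m'.mul_eq_sum (r - c) hN, m.mul_sum_left, m.mul_sum_left]
  refine sum_congr rfl fun n _ ↦ ?_
  rw [h.mul_poly_smul_left, m.mul_smul_left, eval_pow, eval_neg, eval_add, eval_X, eval_C,
    neg_add', neg_neg]

theorem mul_cmul_right (m' : ConformalProduct L) (lam c : ℂ) (x : L) {a b : L} {N : ℕ}
    (hN : ∀ n, N ≤ n → m'.coeff n a b = 0) :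
    m.mul lam x (m'.cmul c a b) =
      ∑ n ∈ range N, (-(X + C (lam + c))) ^ n • m.mul lam x (m'.coeff n a b) := by
  rw [m'.cmul_eq_sum c hN, m.mul_sum_right]
  refine sum_congr rfl fun n _ ↦ ?_
  rw [h.mul_poly_smul_right, pow_comp, neg_comp, add_comp, X_comp, C_comp, C_add, add_assoc]

end IsLambdaProduct

section Symmetry

variable {M : Type*} [AddCommGroup M] [Module ℂ M] [Module ℂ[X] M] {S : SuperModule M}
  {i j : ZMod 2} {a b : M}

theorem IsCommAssoc.cmul_eq {m : ConformalProduct M} (h : IsCommAssoc S m)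
    (ha : a ∈ S.grade i) (hb : b ∈ S.grade j) (lam : ℂ) :
    m.cmul lam b a = sgn i j • m.mul lam a b := by
  rw [h.comm i j a b ha hb, smul_smul, sgn_mul_self, one_smul]

theorem IsLie.cmul_eq {br : ConformalProduct M} (h : IsLie S br)
    (ha : a ∈ S.grade i) (hb : b ∈ S.grade j) (lam : ℂ) :
    br.cmul lam b a = -(sgn i j • br.mul lam a b) := by
  rw [h.skew i j a b ha hb, smul_neg, smul_smul, sgn_mul_self, one_smul, neg_neg]

end Symmetry

namespace IsTPCSA

variable {S : SuperModule L} {m br : ConformalProduct L} (hT : IsTPCSA S m br)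
  {i j k : ZMod 2} {x y z : L}
include hT

theorem bracket_mul_comm (hz : z ∈ S.grade k) (hx : x ∈ S.grade i) (α lam : ℂ) (y : L) :
    br.mul (α + lam) (m.mul α z x) y = sgn k i • br.mul (α + lam) (m.mul lam x z) y := by
  rw [hT.commAssoc.comm k i z x hz hx, br.mul_smul_left, hT.lie.mul_cmul_left,
    add_sub_cancel_left]

theorem transposedLeibniz_comm (hz : z ∈ S.grade k) (hx : x ∈ S.grade i) (α lam : ℂ)
    (y : L) : (2 : ℂ) • m.mul α z (br.mul lam x y) =
      sgn k i • (br.mul (α + lam) (m.mul lam x z) y + br.mul lam x (m.mul α z y)) := by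
  rw [hT.transposedLeibniz k i z x hz hx y α lam, hT.bracket_mul_comm hz hx, smul_add]

theorem two_smul_cmul_bracket (hx : x ∈ S.grade i) (hz : z ∈ S.grade k) (lam mu : ℂ) (y : L) :
    (2 : ℂ) • m.cmul (lam + mu) z (br.mul lam x y) =
      sgn k i • (br.cmul mu (m.mul lam x z) y + br.mul lam x (m.cmul mu z y)) := by
  set w := br.mul lam x y
  set u := m.mul lam x z
  obtain ⟨N, hN⟩ := Filter.eventually_atTop.1 ((m.eventually_coeff_eq_zero z w).and
    ((br.eventually_coeff_eq_zero u y).and (m.eventually_coeff_eq_zero z y)))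
  set c : ℕ → L := fun n ↦ br.mul lam x (m.coeff n z y)
  set b' := shiftCoeff N lam fun n ↦ br.coeff n u y
  -- `transposedLeibniz_comm` holds coefficientwise in `α`, so `α` may be replaced by `-∂-λ-μ`.
  have hcoeff : ∀ n ∈ range N, (2 : ℂ) • m.coeff n z w = sgn k i • (b' n + c n) := by
    refine eq_of_forall_sum_pow_smul_eq fun α ↦ ?_
    have key := hT.transposedLeibniz_comm hz hx α lam y
    have shift := sum_add_pow_smul_eq N lam (fun n ↦ br.coeff n u y) α
    rw [Algebra.algebraMap_self_apply] at shift
    rw [m.mul_eq_sum α fun n hn ↦ (hN n hn).1, br.mul_eq_sum (α + lam) fun n hn ↦ (hN n hn).2.1,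
      m.mul_eq_sum α fun n hn ↦ (hN n hn).2.2, br.mul_sum_right, shift] at key
    simp only [smul_sum, smul_add, sum_add_distrib, br.mul_smul_right] at key ⊢
    simpa only [smul_comm (α ^ _)] using key
  have hP : -(X + C (lam + mu)) + algebraMap ℂ ℂ[X] lam = -(X + C mu) := by
    rw [algebraMap_eq, C_add]; ring
  calc (2 : ℂ) • m.cmul (lam + mu) z w
      = ∑ n ∈ range N, (-(X + C (lam + mu))) ^ n • ((2 : ℂ) • m.coeff n z w) := by
        rw [m.cmul_eq_sum _ fun n hn ↦ (hN n hn).1, smul_sum]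
        simp only [smul_comm (2 : ℂ)]
    _ = ∑ n ∈ range N, (-(X + C (lam + mu))) ^ n • (sgn k i • (b' n + c n)) :=
        sum_congr rfl fun n hn ↦ by rw [hcoeff n hn]
    _ = sgn k i • (∑ n ∈ range N, (-(X + C (lam + mu))) ^ n • b' n +
          ∑ n ∈ range N, (-(X + C (lam + mu))) ^ n • c n) := by
        simp only [smul_add, sum_add_distrib, smul_sum, smul_comm (sgn k i)]
    _ = sgn k i • (br.cmul mu u y + br.mul lam x (m.cmul mu z y)) := by
        rw [← sum_add_pow_smul_eq, hP, br.cmul_eq_sum mu fun n hn ↦ (hN n hn).2.1,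
          hT.lie.mul_cmul_right m lam mu x fun n hn ↦ (hN n hn).2.2]

theorem two_smul_bracket_mul (hx : x ∈ S.grade i) (hy : y ∈ S.grade j) (hz : z ∈ S.grade k)
    (lam mu : ℂ) : (2 : ℂ) • m.mul (lam + mu) (br.mul lam x y) z =
      br.mul lam x (m.mul mu y z) - sgn i j • br.mul mu y (m.mul lam x z) := by
  rw [hT.commAssoc.comm (i + j) k _ z (hT.lie.mul_mem hx hy lam) hz, smul_comm,
    hT.two_smul_cmul_bracket hx hz, hT.lie.cmul_eq hy (hT.commAssoc.mul_mem hx hz lam),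
    hT.commAssoc.cmul_eq hy hz, br.mul_smul_right, sgn_add_left, sgn_add_right, sgn_comm k,
    sgn_comm j i]
  linear_combination (norm := module)
    (sgn_mul_self i k • sgn j k ^ 2 + sgn_mul_self j k) •
      (br.mul lam x (m.mul mu y z) - sgn i j • br.mul mu y (m.mul lam x z))

theorem mul_bracket_cyclic (hx : x ∈ S.grade i) (hy : y ∈ S.grade j) (hz : z ∈ S.grade k)
    (lam mu : ℂ) : m.mul lam x (br.mul mu y z) - sgn i j • m.mul mu y (br.mul lam x z) +
      m.mul (lam + mu) (br.mul lam x y) z = 0 := by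
  have h₁ := hT.transposedLeibniz i j x y hx hy z lam mu
  have h₂ := hT.transposedLeibniz_comm hy hx mu lam z
  have h₃ := hT.two_smul_bracket_mul hx hy hz lam mu
  rw [add_comm mu, sgn_comm] at h₂
  refine smul_right_injective L (two_ne_zero (α := ℂ)) ?_
  linear_combination (norm := module) h₁ - sgn i j • h₂ + h₃ -
    sgn_mul_self i j • (br.mul (lam + mu) (m.mul lam x y) z + br.mul lam x (m.mul mu y z))

end IsTPCSA

/-- the cyclic identity (3.14) in a transposed Poisson conformal superalgebra. -/
theorem statement_0 (S : SuperModule L) (m br : ConformalProduct L)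
    (hT : IsTPCSA S m br) (i j k : ZMod 2) (x y z : L)
    (hx : x ∈ S.grade i) (hy : y ∈ S.grade j) (hz : z ∈ S.grade k) (lam mu : ℂ) :
    sgn i k • m.mul lam x (br.mul mu y z)
      + sgn i j • m.mul mu y (br.cmul lam z x)
      + sgn j k • m.cmul (lam + mu) z (br.mul lam x y) = 0 := by
  rw [hT.lie.cmul_eq hx hz, m.mul_neg_right, m.mul_smul_right,
    hT.commAssoc.cmul_eq (hT.lie.mul_mem hx hy lam) hz, sgn_add_left]
  linear_combination (norm := module) sgn i k • hT.mul_bracket_cyclic hx hy hz lam mu +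
    sgn_mul_self j k • (sgn i k • m.mul (lam + mu) (br.mul lam x y) z)

end TPCSAFormal
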